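/- Let S = {x_1, ..., x_m} ⊂ ℝ with x_1 < ... < x_m. Define v : ℝ → ℝ piecewise by: v(x) = x − x_1 + 1 for x ≤ x_1; for each i < m, v(x) = (−2/(x_{i+1}−x_i))(x − x_i) + 1 on [x_i, (x_i+x_{i+1})/2] and v(x) = (1/(x_{i+1}−x_i))(x − x_{i+1}) + 1 on [(x_i+x_{i+1})/2, x_{i+1}]; and v(x) = x_m − x + 1 for x ≥ x_m. Then v is well-defined and continuous, v(x_i) = 1 for all i, and the set of local maximum points of v is exactly S. -/

import Mathlib

/-- `p` is a local maximum point of `v`: `v y ≤ v p` in a neighborhood of `p`. -/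
def IsLocalMaxPt (v : ℝ → ℝ) (p : ℝ) : Prop :=
  ∃ ε > 0, ∀ y : ℝ, |y - p| < ε → v y ≤ v p

/-! Each piece of `v` is affine and rises towards the nearest node: slope `1` on `(-∞, x 0]`,
negative slope on `[x i, b i]` and on `[x m, ∞)`, positive slope on `[b i, x (i+1)]`, where `b i`
is the breakpoint of the `i`-th gap. Hence `v` equals `1` at the nodes and is at most `1`
everywhere, so every node is a maximum; any other point lies strictly inside or at the far end of
a strictly monotone piece, so `v` takes larger values arbitrarily close to it on one side. -/

open Set Filter Topology

theorem Fin.exists_castSucc_le_and_lt_succ {α : Type*} [LinearOrder α] :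
    ∀ {m : ℕ} (f : Fin (m + 1) → α) {y : α}, f 0 ≤ y → y < f (Fin.last m) →
      ∃ i : Fin m, f i.castSucc ≤ y ∧ y < f i.succ
  | 0, _, _, h0, hlast => absurd h0 (not_le.2 hlast)
  | m + 1, f, y, h0, hlast => by
    by_cases hy : y < f (Fin.last m).castSucc
    · obtain ⟨i, hi⟩ := exists_castSucc_le_and_lt_succ (f ∘ Fin.castSucc) h0 hy
      exact ⟨i.castSucc, hi⟩
    · exact ⟨Fin.last m, not_lt.1 hy, hlast⟩

theorem continuous_of_continuousOn_Iic_Icc_Ici {α β : Type*} [LinearOrder α] [TopologicalSpace α]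
    [OrderClosedTopology α] [TopologicalSpace β] {m : ℕ} {x : Fin (m + 1) → α} {f : α → β}
    (hleft : ContinuousOn f (Iic (x 0)))
    (hgap : ∀ i : Fin m, ContinuousOn f (Icc (x i.castSucc) (x i.succ)))
    (hright : ContinuousOn f (Ici (x (Fin.last m)))) : Continuous f := by
  have hcover : Iic (x 0) ∪ (⋃ i : Fin m, Icc (x i.castSucc) (x i.succ)) ∪ Ici (x (Fin.last m))
      = univ := by
    refine eq_univ_of_forall fun y => ?_
    rcases le_or_gt y (x 0) with h0 | h0
    · exact Or.inl (Or.inl h0)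
    rcases le_or_gt (x (Fin.last m)) y with hlast | hlast
    · exact Or.inr hlast
    obtain ⟨i, hi⟩ := Fin.exists_castSucc_le_and_lt_succ x h0.le hlast
    exact Or.inl (Or.inr (mem_iUnion.2 ⟨i, hi.1, hi.2.le⟩))
  have hclosed : IsClosed (⋃ i : Fin m, Icc (x i.castSucc) (x i.succ)) :=
    isClosed_iUnion_of_finite fun _ => isClosed_Icc
  have hgaps := (locallyFinite_of_finite _).continuousOn_iUnion (fun _ => isClosed_Icc) hgap
  refine continuousOn_univ.1 (hcover ▸ ?_)
  exact (hleft.union_of_isClosed hgaps isClosed_Iic hclosed).union_of_isClosed hright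
    (isClosed_Iic.union hclosed) isClosed_Ici

theorem StrictMonoOn.not_isLocalMax {α β : Type*} [LinearOrder α] [TopologicalSpace α]
    [OrderTopology α] [DenselyOrdered α] [Preorder β] {f : α → β} {a b p : α}
    (hf : StrictMonoOn f (Icc a b)) (hp : p ∈ Ico a b) : ¬IsLocalMax f p := by
  intro hmax
  have : (𝓝[>] p).NeBot := nhdsGT_neBot_of_exists_gt ⟨b, hp.2⟩
  obtain ⟨y, hy, hfy⟩ := (Eventually.and (Ioo_mem_nhdsGT hp.2) (nhdsWithin_le_nhds hmax)).exists
  exact (hf ⟨hp.1, hp.2.le⟩ ⟨hp.1.trans hy.1.le, hy.2.le⟩ hy.1).not_ge hfy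

theorem StrictAntiOn.not_isLocalMax {α β : Type*} [LinearOrder α] [TopologicalSpace α]
    [OrderTopology α] [DenselyOrdered α] [Preorder β] {f : α → β} {a b p : α}
    (hf : StrictAntiOn f (Icc a b)) (hp : p ∈ Ioc a b) : ¬IsLocalMax f p := by
  intro hmax
  have : (𝓝[<] p).NeBot := nhdsLT_neBot_of_exists_lt ⟨a, hp.1⟩
  obtain ⟨y, hy, hfy⟩ := (Eventually.and (Ioo_mem_nhdsLT hp.1) (nhdsWithin_le_nhds hmax)).exists
  exact (hf ⟨hy.1.le, hy.2.le.trans hp.2⟩ ⟨hp.1.le, hp.2⟩ hy.2).not_ge hfy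

theorem isLocalMaxPt_iff_isLocalMax {v : ℝ → ℝ} {p : ℝ} : IsLocalMaxPt v p ↔ IsLocalMax v p := by
  simp only [IsLocalMaxPt, IsLocalMax, IsMaxFilter, Metric.eventually_nhds_iff, Real.dist_eq]

-- The two affine pieces of `v` on the `i`-th gap intersect at this point.
noncomputable def sawtoothBreak {m : ℕ} (x : Fin (m + 1) → ℝ) (i : Fin m) : ℝ :=
  (2 * x i.castSucc + x i.succ) / 3

structure IsSawtooth {m : ℕ} (x : Fin (m + 1) → ℝ) (v : ℝ → ℝ) : Prop where
  left : ∀ y : ℝ, y ≤ x 0 → v y = y - x 0 + 1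
  dec : ∀ i : Fin m, ∀ y ∈ Icc (x i.castSucc) (sawtoothBreak x i),
    v y = (-2 / (x i.succ - x i.castSucc)) * (y - x i.castSucc) + 1
  inc : ∀ i : Fin m, ∀ y ∈ Icc (sawtoothBreak x i) (x i.succ),
    v y = (1 / (x i.succ - x i.castSucc)) * (y - x i.succ) + 1
  right : ∀ y : ℝ, x (Fin.last m) ≤ y → v y = x (Fin.last m) - y + 1

section Sawtooth

variable {m : ℕ} {x : Fin (m + 1) → ℝ} {v : ℝ → ℝ}

theorem castSucc_lt_sawtoothBreak (hx : StrictMono x) (i : Fin m) :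
    x i.castSucc < sawtoothBreak x i := by
  have := hx i.castSucc_lt_succ
  unfold sawtoothBreak; linarith

theorem sawtoothBreak_lt_succ (hx : StrictMono x) (i : Fin m) :
    sawtoothBreak x i < x i.succ := by
  have := hx i.castSucc_lt_succ
  unfold sawtoothBreak; linarith

namespace IsSawtooth

theorem strictMonoOn_Iic (hv : IsSawtooth x v) : StrictMonoOn v (Iic (x 0)) :=
  fun y hy z hz hyz => by rw [hv.left y hy, hv.left z hz]; linarith

theorem strictAntiOn_Ici (hv : IsSawtooth x v) : StrictAntiOn v (Ici (x (Fin.last m))) :=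
  fun y hy z hz hyz => by rw [hv.right y hy, hv.right z hz]; linarith

theorem strictAntiOn_Icc_castSucc (hv : IsSawtooth x v) (hx : StrictMono x) (i : Fin m) :
    StrictAntiOn v (Icc (x i.castSucc) (sawtoothBreak x i)) := fun y hy z hz hyz => by
  have hslope : -2 / (x i.succ - x i.castSucc) < 0 :=
    div_neg_of_neg_of_pos (by norm_num) (sub_pos.2 (hx i.castSucc_lt_succ))
  rw [hv.dec i y hy, hv.dec i z hz]
  linarith [mul_lt_mul_of_neg_left (sub_lt_sub_right hyz (x i.castSucc)) hslope]

theorem strictMonoOn_Icc_succ (hv : IsSawtooth x v) (hx : StrictMono x) (i : Fin m) :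
    StrictMonoOn v (Icc (sawtoothBreak x i) (x i.succ)) := fun y hy z hz hyz => by
  have hslope : 0 < 1 / (x i.succ - x i.castSucc) :=
    one_div_pos.2 (sub_pos.2 (hx i.castSucc_lt_succ))
  rw [hv.inc i y hy, hv.inc i z hz]
  linarith [mul_lt_mul_of_pos_left (sub_lt_sub_right hyz (x i.succ)) hslope]

theorem apply_eq_one (hv : IsSawtooth x v) (hx : StrictMono x) (i : Fin (m + 1)) :
    v (x i) = 1 := by
  induction i using Fin.lastCases with
  | last => rw [hv.right _ le_rfl, sub_self, zero_add]
  | cast i =>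
    rw [hv.dec i _ ⟨le_rfl, (castSucc_lt_sawtoothBreak hx i).le⟩, sub_self, mul_zero, zero_add]

theorem le_one (hv : IsSawtooth x v) (hx : StrictMono x) (y : ℝ) : v y ≤ 1 := by
  rcases le_or_gt y (x 0) with h0 | h0
  · exact (hv.strictMonoOn_Iic.monotoneOn h0 self_mem_Iic h0).trans_eq (hv.apply_eq_one hx 0)
  rcases le_or_gt (x (Fin.last m)) y with hlast | hlast
  · exact (hv.strictAntiOn_Ici.antitoneOn self_mem_Ici hlast hlast).trans_eq
      (hv.apply_eq_one hx _)
  obtain ⟨i, hi, hi'⟩ := Fin.exists_castSucc_le_and_lt_succ x h0.le hlast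
  rcases le_or_gt y (sawtoothBreak x i) with hb | hb
  · exact ((hv.strictAntiOn_Icc_castSucc hx i).antitoneOn
      ⟨le_rfl, (castSucc_lt_sawtoothBreak hx i).le⟩ ⟨hi, hb⟩ hi).trans_eq (hv.apply_eq_one hx _)
  · exact ((hv.strictMonoOn_Icc_succ hx i).monotoneOn ⟨hb.le, hi'.le⟩
      ⟨(sawtoothBreak_lt_succ hx i).le, le_rfl⟩ hi'.le).trans_eq (hv.apply_eq_one hx _)

theorem isLocalMax_apply (hv : IsSawtooth x v) (hx : StrictMono x) (i : Fin (m + 1)) :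
    IsLocalMax v (x i) :=
  IsMaxOn.isLocalMax (fun y _ => (hv.le_one hx y).trans_eq (hv.apply_eq_one hx i).symm)
    univ_mem

theorem not_isLocalMax (hv : IsSawtooth x v) (hx : StrictMono x) {p : ℝ} (hp : p ∉ range x) :
    ¬IsLocalMax v p := by
  have hnode : ∀ i, p ≠ x i := fun i h => hp ⟨i, h.symm⟩
  rcases le_or_gt p (x 0) with h0 | h0
  · exact (hv.strictMonoOn_Iic.mono Icc_subset_Iic_self).not_isLocalMax
      ⟨le_rfl, h0.lt_of_ne (hnode 0)⟩
  rcases le_or_gt (x (Fin.last m)) p with hlast | hlast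
  · exact (hv.strictAntiOn_Ici.mono Icc_subset_Ici_self).not_isLocalMax
      ⟨hlast.lt_of_ne (hnode _).symm, le_rfl⟩
  obtain ⟨i, hi, hi'⟩ := Fin.exists_castSucc_le_and_lt_succ x h0.le hlast
  rcases le_or_gt p (sawtoothBreak x i) with hb | hb
  · exact (hv.strictAntiOn_Icc_castSucc hx i).not_isLocalMax ⟨hi.lt_of_ne (hnode _).symm, hb⟩
  · exact (hv.strictMonoOn_Icc_succ hx i).not_isLocalMax ⟨hb.le, hi'⟩

theorem continuous (hv : IsSawtooth x v) (hx : StrictMono x) : Continuous v := by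
  refine continuous_of_continuousOn_Iic_Icc_Ici (ContinuousOn.congr (by fun_prop) hv.left)
    (fun i => ?_) (ContinuousOn.congr (by fun_prop) hv.right)
  rw [← Icc_union_Icc_eq_Icc (castSucc_lt_sawtoothBreak hx i).le (sawtoothBreak_lt_succ hx i).le]
  exact (ContinuousOn.congr (by fun_prop) (hv.dec i)).union_of_isClosed
    (ContinuousOn.congr (by fun_prop) (hv.inc i)) isClosed_Icc isClosed_Icc

end IsSawtooth

end Sawtooth

/-- for points `x 0 < x 1 < ... < x m`, the function `v` defined by
`v y = y − x 0 + 1` left of `x 0`; on each gap `[x i, x (i+1)]`, by the decreasing affine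
piece of slope `−2/(x (i+1) − x i)` through `(x i, 1)` up to the breakpoint where it meets
the increasing affine piece of slope `1/(x (i+1) − x i)` through `(x (i+1), 1)` (the two
pieces intersect at `(2 x i + x (i+1))/3`), and `v y = x m − y + 1` right of `x m`,
is continuous, satisfies `v (x i) = 1` for all `i`, and its set of local maximum points is
exactly `{x 0, ..., x m}`. -/
theorem explicit_sawtooth_properties
    (m : ℕ) (x : Fin (m + 1) → ℝ) (hx : StrictMono x)
    (v : ℝ → ℝ)
    (hleft : ∀ y : ℝ, y ≤ x 0 → v y = y - x 0 + 1)
    (hdec : ∀ i : Fin m, ∀ y ∈ Set.Icc (x i.castSucc)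
        ((2 * x i.castSucc + x i.succ) / 3),
      v y = (-2 / (x i.succ - x i.castSucc)) * (y - x i.castSucc) + 1)
    (hinc : ∀ i : Fin m, ∀ y ∈ Set.Icc ((2 * x i.castSucc + x i.succ) / 3)
        (x i.succ),
      v y = (1 / (x i.succ - x i.castSucc)) * (y - x i.succ) + 1)
    (hright : ∀ y : ℝ, x (Fin.last m) ≤ y → v y = x (Fin.last m) - y + 1) :
    Continuous v ∧ (∀ i : Fin (m + 1), v (x i) = 1) ∧
      (∀ p : ℝ, IsLocalMaxPt v p ↔ p ∈ Set.range x) := by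
  have hv : IsSawtooth x v := ⟨hleft, hdec, hinc, hright⟩
  refine ⟨hv.continuous hx, hv.apply_eq_one hx, fun p => ?_⟩
  rw [isLocalMaxPt_iff_isLocalMax]
  constructor
  · exact fun hmax => by_contra fun hp => hv.not_isLocalMax hx hp hmax
  · rintro ⟨i, rfl⟩
    exact hv.isLocalMax_apply hx i
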